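/- Let α, β ∈ ℂ with |α|² + |β|² = 1 and ψ = (α, β) ∈ ℂ²; let X = ![![0,1],![1,0]], Z = ![![1,0],![0,−1]] be the Pauli matrices and qZ = |⟨ψ, Zψ⟩|², qX = |⟨ψ, Xψ⟩|², qXZ = |⟨ψ, XZψ⟩|². Let p : {0,1} × {0,1} → ℝ satisfy p(0,s) + p(1,s) = 1 for each s, set P = p(0,0) − p(0,1), and let ρ_B = (1/4) Σ_{y₁,y₂,s₁,s₂ ∈ {0,1}} p(y₁,s₁)·p(y₂,s₂) · (X^{y₁⊕s₁} Z^{y₂⊕s₂} ψ)(X^{y₁⊕s₁} Z^{y₂⊕s₂} ψ)†. For F_W ∈ [0,1] define ρ = F_W · ρ_B + (1 − F_W) · (1/2)·I₂, where I₂ is the 2×2 identity matrix. Then the teleportation fidelity with the imperfect (Werner) entanglement resource satisfies ⟨ψ, ρ ψ⟩ = 1/2 + F_W · P·(qX + qZ + qXZ·P)/2. -/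

import Mathlib

/-!
Bob's expectation is affine in the Werner mixture, and the noise term contributes `1/2`. In `ρ_B`
the detection outcomes enter only through the error bits `a = y₁ ⊕ s₁`, `b = y₂ ⊕ s₂`, whose total
weights are `1 ± P`, so `⟨ψ, ρ_B ψ⟩ = (1/4) ∑ w_a w_b |⟨ψ, XᵃZᵇψ⟩|²`. The identity
`qX + qZ + qXZ = 1` (the Bloch vector of a pure state is a unit vector, as `XZ = -iY`) then
collapses this quadratic form in `1 ± P` to the claimed expression.
-/

open Matrix

section Expectation

variable {𝕜 n : Type*} [RCLike 𝕜] [Fintype n]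

theorem star_dotProduct_vecMulVec_star_mulVec (ψ v : n → 𝕜) :
    star ψ ⬝ᵥ vecMulVec v (star v) *ᵥ ψ = ((‖star ψ ⬝ᵥ v‖ ^ 2 : ℝ) : 𝕜) := by
  rw [vecMulVec_mulVec, op_smul_eq_smul, dotProduct_smul, smul_eq_mul, star_dotProduct,
    RCLike.ofReal_pow, ← RCLike.conj_mul]
  rfl

theorem star_dotProduct_self_eq_sum_sq_norm (ψ : n → 𝕜) :
    star ψ ⬝ᵥ ψ = ((∑ i, ‖ψ i‖ ^ 2 : ℝ) : 𝕜) := by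
  simp [dotProduct, RCLike.conj_mul]

end Expectation

section FlipWeight

variable {R : Type*} [CommRing R] (p : Fin 2 → Fin 2 → R)

/-- When `p 0 s + p 1 s = 1`, this is the total weight `∑_{y ⊕ s = a} p y s`. -/
def flipWeight : Fin 2 → R :=
  ![1 + (p 0 0 - p 0 1), 1 - (p 0 0 - p 0 1)]

variable {p}

theorem sum_sum_mul_apply_add (hp : ∀ s, p 0 s + p 1 s = 1) (f : Fin 2 → R) :
    ∑ y, ∑ s, p y s * f (y + s) = ∑ a, flipWeight p a * f a := by
  simp [Fin.sum_univ_two, flipWeight]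
  linear_combination f 1 * hp 0 + f 0 * hp 1

theorem sum_sum_sum_sum_mul_mul_apply_add (hp : ∀ s, p 0 s + p 1 s = 1)
    (g : Fin 2 → Fin 2 → R) :
    ∑ y₁, ∑ y₂, ∑ s₁, ∑ s₂, p y₁ s₁ * p y₂ s₂ * g (y₁ + s₁) (y₂ + s₂)
      = ∑ a, ∑ b, flipWeight p a * flipWeight p b * g a b := by
  calc _ = ∑ y₁, ∑ s₁, p y₁ s₁ * ∑ y₂, ∑ s₂, p y₂ s₂ * g (y₁ + s₁) (y₂ + s₂) := by
        simp only [Finset.mul_sum, mul_assoc]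
        exact Finset.sum_congr rfl fun _ _ => Finset.sum_comm
    _ = ∑ a, flipWeight p a * ∑ b, flipWeight p b * g a b := by
        simp only [sum_sum_mul_apply_add hp]
        exact sum_sum_mul_apply_add hp fun a => ∑ b, flipWeight p b * g a b
    _ = _ := by simp only [Finset.mul_sum, mul_assoc]

end FlipWeight

theorem sq_norm_pauli_expectations_sum (α β : ℂ) :
    ‖star ![α, β] ⬝ᵥ !![0, 1; 1, 0] *ᵥ ![α, β]‖ ^ 2
      + ‖star ![α, β] ⬝ᵥ !![1, 0; 0, -1] *ᵥ ![α, β]‖ ^ 2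
      + ‖star ![α, β] ⬝ᵥ (!![0, 1; 1, 0] * !![1, 0; 0, -1] : Matrix (Fin 2) (Fin 2) ℂ)
          *ᵥ ![α, β]‖ ^ 2
      = (‖α‖ ^ 2 + ‖β‖ ^ 2) ^ 2 := by
  apply Complex.ofReal_injective
  push_cast
  simp only [← Complex.mul_conj']
  simp [dotProduct, mulVec, Fin.sum_univ_two]
  ring

theorem teleportation_fidelity_werner_general (α β : ℂ)
    (hnorm : ‖α‖ ^ 2 + ‖β‖ ^ 2 = 1)
    (p : Fin 2 → Fin 2 → ℝ)
    (hp : ∀ s : Fin 2, p 0 s + p 1 s = 1)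
    (FW : ℝ) :
    let ψ : Fin 2 → ℂ := ![α, β]
    let X : Matrix (Fin 2) (Fin 2) ℂ := !![0, 1; 1, 0]
    let Z : Matrix (Fin 2) (Fin 2) ℂ := !![1, 0; 0, -1]
    let qZ : ℝ := ‖(star ψ ⬝ᵥ Z.mulVec ψ)‖ ^ 2
    let qX : ℝ := ‖(star ψ ⬝ᵥ X.mulVec ψ)‖ ^ 2
    let qXZ : ℝ := ‖(star ψ ⬝ᵥ (X * Z).mulVec ψ)‖ ^ 2
    let P : ℝ := p 0 0 - p 0 1
    let ρB : Matrix (Fin 2) (Fin 2) ℂ :=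
      (1 / 4 : ℂ) • ∑ y₁ : Fin 2, ∑ y₂ : Fin 2, ∑ s₁ : Fin 2, ∑ s₂ : Fin 2,
        ((p y₁ s₁ * p y₂ s₂ : ℝ) : ℂ) •
          vecMulVec
            ((X ^ ((y₁ + s₁ : Fin 2) : ℕ) * Z ^ ((y₂ + s₂ : Fin 2) : ℕ)).mulVec ψ)
            (star ((X ^ ((y₁ + s₁ : Fin 2) : ℕ) * Z ^ ((y₂ + s₂ : Fin 2) : ℕ)).mulVec ψ))
    let ρ : Matrix (Fin 2) (Fin 2) ℂ :=
      ((FW : ℝ) : ℂ) • ρB + (((1 - FW : ℝ)) : ℂ) • ((1 / 2 : ℂ) • (1 : Matrix (Fin 2) (Fin 2) ℂ))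
    star ψ ⬝ᵥ ρ.mulVec ψ
      = ((1 / 2 + FW * (P * (qX + qZ + qXZ * P)) / 2 : ℝ) : ℂ) := by
  intro ψ X Z qZ qX qXZ P ρB ρ
  set q : Fin 2 → Fin 2 → ℝ := fun a b => ‖star ψ ⬝ᵥ (X ^ (a : ℕ) * Z ^ (b : ℕ)) *ᵥ ψ‖ ^ 2
  have hρ : star ψ ⬝ᵥ ρ *ᵥ ψ = ((FW * (1 / 4 * ∑ y₁, ∑ y₂, ∑ s₁, ∑ s₂,
      p y₁ s₁ * p y₂ s₂ * q (y₁ + s₁) (y₂ + s₂)) + (1 - FW) / 2 * (‖α‖ ^ 2 + ‖β‖ ^ 2) : ℝ) : ℂ) := by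
    simp only [ρ, ρB, add_mulVec, smul_mulVec, sum_mulVec, one_mulVec, dotProduct_add,
      dotProduct_smul, dotProduct_sum, smul_eq_mul, star_dotProduct_vecMulVec_star_mulVec,
      star_dotProduct_self_eq_sum_sq_norm]
    push_cast
    simp [q, ψ, Fin.sum_univ_two]
    ring
  have hq00 : q 0 0 = 1 := by
    simp only [q, Fin.val_zero, pow_zero, mul_one, one_mulVec]
    rw [star_dotProduct_self_eq_sum_sq_norm, Fin.sum_univ_two]
    simp [ψ, hnorm]
  have hq01 : q 0 1 = qZ := by simp [q, qZ]
  have hq10 : q 1 0 = qX := by simp [q, qX]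
  have hq11 : q 1 1 = qXZ := by simp [q, qXZ]
  have hbloch : qX + qZ + qXZ = 1 := by
    have h := sq_norm_pauli_expectations_sum α β
    rwa [hnorm, one_pow] at h
  rw [hρ, sum_sum_sum_sum_mul_mul_apply_add hp]
  congr 1
  simp only [Fin.sum_univ_two, flipWeight, cons_val_zero, cons_val_one, hq00, hq01, hq10, hq11,
    hnorm]
  linear_combination (FW * (1 - 2 * P - P ^ 2) / 4) * hbloch

/-- Teleportation fidelity with an imperfect (Werner) entanglement resource:
with `ρ = F_W ρ_B + (1 − F_W)(1/2)I₂`, the fidelity is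
`⟨ψ, ρ ψ⟩ = 1/2 + F_W · P(qX + qZ + qXZ·P)/2`. -/
theorem teleportation_fidelity_werner (α β : ℂ)
    (hnorm : ‖α‖ ^ 2 + ‖β‖ ^ 2 = 1)
    (p : Fin 2 → Fin 2 → ℝ)
    (hp : ∀ s : Fin 2, p 0 s + p 1 s = 1)
    (FW : ℝ) (hFW : FW ∈ Set.Icc (0 : ℝ) 1) :
    let ψ : Fin 2 → ℂ := ![α, β]
    let X : Matrix (Fin 2) (Fin 2) ℂ := !![0, 1; 1, 0]
    let Z : Matrix (Fin 2) (Fin 2) ℂ := !![1, 0; 0, -1]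
    let qZ : ℝ := ‖(star ψ ⬝ᵥ Z.mulVec ψ)‖ ^ 2
    let qX : ℝ := ‖(star ψ ⬝ᵥ X.mulVec ψ)‖ ^ 2
    let qXZ : ℝ := ‖(star ψ ⬝ᵥ (X * Z).mulVec ψ)‖ ^ 2
    let P : ℝ := p 0 0 - p 0 1
    let ρB : Matrix (Fin 2) (Fin 2) ℂ :=
      (1 / 4 : ℂ) • ∑ y₁ : Fin 2, ∑ y₂ : Fin 2, ∑ s₁ : Fin 2, ∑ s₂ : Fin 2,
        ((p y₁ s₁ * p y₂ s₂ : ℝ) : ℂ) •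
          vecMulVec
            ((X ^ ((y₁ + s₁ : Fin 2) : ℕ) * Z ^ ((y₂ + s₂ : Fin 2) : ℕ)).mulVec ψ)
            (star ((X ^ ((y₁ + s₁ : Fin 2) : ℕ) * Z ^ ((y₂ + s₂ : Fin 2) : ℕ)).mulVec ψ))
    let ρ : Matrix (Fin 2) (Fin 2) ℂ :=
      ((FW : ℝ) : ℂ) • ρB + (((1 - FW : ℝ)) : ℂ) • ((1 / 2 : ℂ) • (1 : Matrix (Fin 2) (Fin 2) ℂ))
    star ψ ⬝ᵥ ρ.mulVec ψ
      = ((1 / 2 + FW * (P * (qX + qZ + qXZ * P)) / 2 : ℝ) : ℂ) :=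
  teleportation_fidelity_werner_general α β hnorm p hp FW
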